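/- An (n+1)-maniplex M with monodromies m_0, …, m_n is isomorphic to K^ξ for some canonical Cayley extender (K, ξ) (on some n-maniplex K) whose derived graph is a maniplex, if and only if there is a subgroup G ≤ Aut(M) acting regularly (freely and transitively) on the set of facets of M such that for every flag Φ of M there exists γ ∈ G with m_n Φ = Φγ. -/

import Mathlib

/-! ## Basic notions: maniplexes, premaniplexes, orbits, automorphisms -/

/-- One monodromy step using an index satisfying `P`. -/
def StepOn {K : Type*} {n : ℕ} (r : Fin n → K → K) (P : Fin n → Prop) (x y : K) : Prop :=
  ∃ i, P i ∧ r i x = y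

/-- `y` is reachable from `x` by monodromies whose index satisfies `P`;
this is the orbit relation of the subgroup generated by those monodromies. -/
def ReachOn {K : Type*} {n : ℕ} (r : Fin n → K → K) (P : Fin n → Prop) : K → K → Prop :=
  Relation.ReflTransGen (StepOn r P)

/-- Orbit relation of the full monodromy group. -/
def ConnRel {K : Type*} {n : ℕ} (r : Fin n → K → K) : K → K → Prop :=
  ReachOn r fun _ => True

/-- Same facet: orbit relation of `r_0, …, r_{n-2}`. -/
def FacetRel {K : Type*} {n : ℕ} (r : Fin n → K → K) : K → K → Prop :=
  ReachOn r fun i => (i : ℕ) + 1 < n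

/-- Same vertex: orbit relation of `r_1, …, r_{n-1}`. -/
def VertexRel {K : Type*} {n : ℕ} (r : Fin n → K → K) : K → K → Prop :=
  ReachOn r fun i => 1 ≤ (i : ℕ)

/-- An `n`-maniplex on the flag set `K`, given by its monodromies `r_0, …, r_{n-1}`. -/
structure IsManiplex {K : Type*} (n : ℕ) (r : Fin n → K → K) : Prop where
  nonempty : Nonempty K
  invol : ∀ i, Function.Involutive (r i)
  fixfree : ∀ (i : Fin n) (x : K), r i x ≠ x
  fixfree₂ : ∀ (i j : Fin n), i ≠ j → ∀ x : K, r i (r j x) ≠ x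
  sq : ∀ (i j : Fin n), 2 ≤ |(i : ℤ) - (j : ℤ)| → ∀ x : K, r i (r j (r i (r j x))) = x
  conn : ∀ x y : K, ConnRel r x y

/-- A premaniplex of rank `n` (fixed points allowed, connectivity not required). -/
structure IsPremaniplex {K : Type*} (n : ℕ) (r : Fin n → K → K) : Prop where
  invol : ∀ i, Function.Involutive (r i)
  sq : ∀ (i j : Fin n), 2 ≤ |(i : ℤ) - (j : ℤ)| → ∀ x : K, r i (r j (r i (r j x))) = x

/-- The automorphism group: permutations of the flags commuting with every monodromy. -/
def autGroup {K : Type*} {n : ℕ} (r : Fin n → K → K) : Subgroup (Equiv.Perm K) where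
  carrier := {τ : Equiv.Perm K | ∀ (i : Fin n) (x : K), τ (r i x) = r i (τ x)}
  one_mem' := by intro i x; rfl
  mul_mem' := by
    intro a b ha hb i x
    simp only [Set.mem_setOf_eq] at ha hb ⊢
    simp only [Equiv.Perm.mul_apply]
    rw [hb i x, ha i (b x)]
  inv_mem' := by
    intro a ha i x
    simp only [Set.mem_setOf_eq] at ha ⊢
    have h := ha i (a⁻¹ x)
    rw [Equiv.Perm.inv_def, Equiv.apply_symm_apply] at h
    rw [← h, Equiv.Perm.inv_def, Equiv.symm_apply_apply]

/-- A pre-extender: an involutory permutation `rn` of the flags of the `n`-maniplex `(K, r)`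
commuting with `r_0, …, r_{n-2}`. -/
structure IsPreExtender {K : Type*} {n : ℕ} (r : Fin n → K → K) (rn : K → K) : Prop where
  maniplex : IsManiplex n r
  rn_invol : Function.Involutive rn
  rn_comm : ∀ i : Fin n, (i : ℕ) + 1 < n → ∀ x : K, rn (r i x) = r i (rn x)

/-- A Cayley extender `(K, rn, ξ)` with voltage group `G`; the voltage is encoded as a
function on flags which is constant on facets. -/
structure IsCayleyExtender {K : Type*} {G : Type*} [Group G] {n : ℕ}
    (r : Fin n → K → K) (rn : K → K) (ξ : K → G) : Prop where
  maniplex : IsManiplex n r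
  rn_invol : Function.Involutive rn
  rn_comm : ∀ i : Fin n, (i : ℕ) + 1 < n → ∀ x : K, rn (r i x) = r i (rn x)
  const : ∀ Φ Ψ : K, FacetRel r Φ Ψ → ξ Φ = ξ Ψ
  voltage_inv : ∀ Φ : K, ξ (rn Φ) = (ξ Φ)⁻¹

/-- A Cayley coextender `(K, r_{-1}, ξ')` with voltage group `G'`; the voltage is encoded as
a function on flags which is constant on vertices. -/
structure IsCayleyCoextender {K : Type*} {G' : Type*} [Group G'] {n : ℕ}
    (r : Fin n → K → K) (rm : K → K) (ξ' : K → G') : Prop where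
  maniplex : IsManiplex n r
  rm_invol : Function.Involutive rm
  rm_comm : ∀ i : Fin n, 1 ≤ (i : ℕ) → ∀ x : K, rm (r i x) = r i (rm x)
  const : ∀ Φ Ψ : K, VertexRel r Φ Ψ → ξ' Φ = ξ' Ψ
  voltage_inv : ∀ Φ : K, ξ' (rm Φ) = (ξ' Φ)⁻¹

/-- Monodromies of the derived graph `K_{rn}^ξ` on flag set `K × G`. -/
def derivedMono {K : Type*} {G : Type*} [Group G] {n : ℕ}
    (r : Fin n → K → K) (rn : K → K) (ξ : K → G) : Fin (n + 1) → K × G → K × G :=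
  fun i p =>
    if h : (i : ℕ) < n then (r ⟨(i : ℕ), h⟩ p.1, p.2) else (rn p.1, ξ p.1 * p.2)

/-- Monodromies of the derived graph `K_{r_{-1}}^{ξ'}` of a coextender, on flag set `K × G'`. -/
def coderivedMono {K : Type*} {G' : Type*} [Group G'] {n : ℕ}
    (r : Fin n → K → K) (rm : K → K) (ξ' : K → G') : Fin (n + 1) → K × G' → K × G' :=
  fun i p =>
    if _h : (i : ℕ) = 0 then (rm p.1, ξ' p.1 * p.2)
    else (r ⟨(i : ℕ) - 1, by have := i.isLt; omega⟩ p.1, p.2)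

/-- Monodromies of the flat amalgamation, on flag set `K × G' × G`. -/
def amalgMono {K : Type*} {G' : Type*} {G : Type*} [Group G'] [Group G] {n : ℕ}
    (r : Fin n → K → K) (rm : K → K) (rn : K → K) (ξ' : K → G') (ξ : K → G) :
    Fin (n + 2) → K × G' × G → K × G' × G :=
  fun i p =>
    if _h0 : (i : ℕ) = 0 then (rm p.1, ξ' p.1 * p.2.1, p.2.2)
    else if _hn : (i : ℕ) = n + 1 then (rn p.1, p.2.1, ξ p.1 * p.2.2)
    else (r ⟨(i : ℕ) - 1, by have := i.isLt; omega⟩ p.1, p.2.1, p.2.2)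

/-- The path intersection property characterizing flag graphs of polytopes. -/
def IsPolytopal {K : Type*} {m : ℕ} (t : Fin m → K → K) : Prop :=
  ∀ (x y : K) (k l : ℕ), k ≤ l → l < m →
    ReachOn t (fun i => k ≤ (i : ℕ)) x y →
    ReachOn t (fun i => (i : ℕ) ≤ l) x y →
    ReachOn t (fun i => k ≤ (i : ℕ) ∧ (i : ℕ) ≤ l) x y

/-- `S` is an `(rn, rn')`-friendly set: for every flag `Φ` and `τ ∈ S` there is `σ ∈ S`
with `rn'(Φτ) = (rn Φ)σ` (automorphisms act on the right, i.e. by function application). -/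
def FriendlySet {K : Type*} (rn rn' : K → K) (S : Set (Equiv.Perm K)) : Prop :=
  ∀ Φ : K, ∀ τ ∈ S, ∃ σ ∈ S, rn' (τ Φ) = σ (rn Φ)

/-- `♥(K, rn)`: the union of all `rn`-friendly subsets of `Aut(K)`. -/
def heartSet {K : Type*} {n : ℕ} (r : Fin n → K → K) (rn : K → K) : Set (Equiv.Perm K) :=
  ⋃₀ {S : Set (Equiv.Perm K) | S ⊆ ↑(autGroup r) ∧ FriendlySet rn rn S}

/-- Relations of the universal voltage group `G(K, rn)`: one generator per flag, generators of
flags in the same facet are identified, and `α_F · α_{rn F} = 1`. -/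
def UnivRels {K : Type*} {n : ℕ} (r : Fin n → K → K) (rn : K → K) : Set (FreeGroup K) :=
  {w | ∃ Φ Ψ : K, FacetRel r Φ Ψ ∧ w = FreeGroup.of Φ * (FreeGroup.of Ψ)⁻¹} ∪
    {w | ∃ Φ : K, w = FreeGroup.of Φ * FreeGroup.of (rn Φ)}

/-- The universal voltage assignment `Φ ↦ α_{F_Φ}` into `G(K, rn)`. -/
def univVoltage {K : Type*} {n : ℕ} (r : Fin n → K → K) (rn : K → K) :
    K → PresentedGroup (UnivRels r rn) :=
  fun Φ => PresentedGroup.of Φ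

section Aux2

variable {A : Type*} {B : Type*} {n : ℕ}

lemma aux_stepOn_symm {r : Fin n → A → A} (hinv : ∀ i, Function.Involutive (r i))
    {P : Fin n → Prop} {x y : A} (h : StepOn r P x y) : StepOn r P y x := by
  obtain ⟨i, hi, hxy⟩ := h
  exact ⟨i, hi, by rw [← hxy]; exact hinv i x⟩

lemma aux_reachOn_symm {r : Fin n → A → A} (hinv : ∀ i, Function.Involutive (r i))
    {P : Fin n → Prop} {x y : A} (h : ReachOn r P x y) : ReachOn r P y x := by
  induction h with
  | refl => exact .refl
  | tail _ h₂ ih => exact Relation.ReflTransGen.trans (.single (aux_stepOn_symm hinv h₂)) ih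

lemma aux_reachOn_map {r : Fin n → A → A} {s : Fin n → B → B} (e : A ≃ B)
    (he : ∀ i x, e (r i x) = s i (e x)) {P : Fin n → Prop} {x y : A}
    (h : ReachOn r P x y) : ReachOn s P (e x) (e y) := by
  induction h with
  | refl => exact .refl
  | tail _ h₂ ih =>
      obtain ⟨i, hi, hxy⟩ := h₂
      exact ih.tail ⟨i, hi, by rw [← he i, hxy]⟩

lemma aux_maniplex_transport {r : Fin n → A → A} {s : Fin n → B → B} (e : A ≃ B)
    (he : ∀ i x, e (r i x) = s i (e x)) (h : IsManiplex n r) : IsManiplex n s where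
  nonempty := ⟨e h.nonempty.some⟩
  invol i y := by
    have hy : e (r i (e.symm y)) = s i y := by rw [he i (e.symm y), e.apply_symm_apply]
    rw [← hy, ← he, h.invol, e.apply_symm_apply]
  fixfree i y h' := by
    apply h.fixfree i (e.symm y)
    apply e.injective
    rw [he, e.apply_symm_apply]; exact h'
  fixfree₂ i j hij y h' := by
    apply h.fixfree₂ i j hij (e.symm y)
    apply e.injective
    rw [he, he, e.apply_symm_apply]; exact h'
  sq i j hij y := by
    have key := h.sq i j hij (e.symm y)
    have := congrArg e key
    rw [he, he, he, he, e.apply_symm_apply] at this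
    exact this
  conn x y := by
    have := h.conn (e.symm x) (e.symm y)
    have := aux_reachOn_map e he this
    rwa [e.apply_symm_apply, e.apply_symm_apply] at this

lemma aux_dm_mul {K G : Type*} [Group G] (r : Fin n → K → K) (ξ : K → G)
    (i : Fin (n + 1)) (Φ : K) (g h : G) :
    derivedMono r id ξ i (Φ, g * h) =
      ((derivedMono r id ξ i (Φ, g)).1, (derivedMono r id ξ i (Φ, g)).2 * h) := by
  unfold derivedMono
  by_cases hi : (i : ℕ) < n <;> simp [hi, mul_assoc]

lemma aux_dm_last {K G : Type*} [Group G] (r : Fin n → K → K) (ξ : K → G)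
    (Φ : K) (g : G) :
    derivedMono r id ξ (Fin.last n) (Φ, g) = (Φ, ξ Φ * g) := by
  simp [derivedMono]

lemma aux_dm_facet₁ {K G : Type*} [Group G] (r : Fin n → K → K) (ξ : K → G)
    {p q : K × G} (h : FacetRel (derivedMono r id ξ) p q) :
    ConnRel r p.1 q.1 ∧ p.2 = q.2 := by
  induction h with
  | refl => exact ⟨.refl, rfl⟩
  | @tail b c _ h₂ ih =>
    obtain ⟨i, hi, hxy⟩ := h₂
    have hi' : (i : ℕ) < n := by omega
    rw [derivedMono, dif_pos hi'] at hxy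
    refine ⟨ih.1.tail ⟨⟨(i : ℕ), hi'⟩, trivial, ?_⟩, ?_⟩
    · rw [← hxy]
    · rw [← hxy]; exact ih.2

lemma aux_dm_facet₂ {K G : Type*} [Group G] (r : Fin n → K → K) (ξ : K → G)
    {Φ Ψ : K} (h : ConnRel r Φ Ψ) (g : G) :
    FacetRel (derivedMono r id ξ) (Φ, g) (Ψ, g) := by
  induction h with
  | refl => exact .refl
  | @tail b c _ h₂ ih =>
    obtain ⟨j, _, hxy⟩ := h₂
    refine ih.tail ⟨⟨(j : ℕ), by omega⟩, by simpa using j.isLt, ?_⟩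
    rw [derivedMono, dif_pos (show ((⟨(j : ℕ), by omega⟩ : Fin (n+1)) : ℕ) < n from j.isLt)]
    rw [Fin.eta, hxy]

lemma aux_forward {M : Type*} {K : Type*} {G : Type*} [Group G]
    (m : Fin (n + 1) → M → M) (r : Fin n → K → K) (ξ : K → G)
    (hCE : IsCayleyExtender r id ξ)
    (e : M ≃ K × G)
    (he : ∀ (i : Fin (n + 1)) (x : M), e (m i x) = derivedMono r id ξ i (e x)) :
    ∃ H : Subgroup (Equiv.Perm M),
      (H : Set (Equiv.Perm M)) ⊆ ↑(autGroup m) ∧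
      (∀ Φ Ψ : M, ∃ τ ∈ H, FacetRel m (τ Φ) Ψ) ∧
      (∀ τ ∈ H, (∃ Φ : M, FacetRel m Φ (τ Φ)) → τ = 1) ∧
      (∀ Φ : M, ∃ τ ∈ H, m (Fin.last n) Φ = τ Φ) := by
  classical
  set s := derivedMono r id ξ with hs
  have he' : ∀ (i : Fin (n + 1)) (y : K × G), e.symm (s i y) = m i (e.symm y) := by
    intro i y
    apply e.injective
    rw [he, e.apply_symm_apply, e.apply_symm_apply]
  set φ : G → Equiv.Perm M := fun h =>
    (e.trans ((Equiv.refl K).prodCongr (Equiv.mulRight h))).trans e.symm with hφdef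
  have hφ : ∀ (h : G) (x : M), φ h x = e.symm ((e x).1, (e x).2 * h) := fun _ _ => rfl
  have heφ : ∀ (h : G) (x : M), e (φ h x) = ((e x).1, (e x).2 * h) := by
    intro h x; rw [hφ, e.apply_symm_apply]
  have hφone : φ 1 = 1 := by
    ext x
    show e.symm ((e x).1, (e x).2 * 1) = x
    rw [mul_one]
    exact e.symm_apply_apply x
  have hφmul : ∀ a b : G, φ a * φ b = φ (b * a) := by
    intro a b
    ext x
    show φ a (φ b x) = _
    rw [hφ, heφ, hφ, mul_assoc]
  have hφinv : ∀ a : G, (φ a)⁻¹ = φ a⁻¹ := by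
    intro a
    symm
    apply eq_inv_of_mul_eq_one_left
    rw [hφmul, mul_inv_cancel, hφone]
  refine ⟨{ carrier := Set.range φ
            one_mem' := ⟨1, hφone⟩
            mul_mem' := ?_
            inv_mem' := ?_ }, ?_, ?_, ?_, ?_⟩
  · rintro x y ⟨a, rfl⟩ ⟨b, rfl⟩
    exact ⟨b * a, (hφmul a b).symm⟩
  · rintro x ⟨a, rfl⟩
    exact ⟨a⁻¹, (hφinv a).symm⟩
  · rintro τ ⟨h, rfl⟩ i x
    apply e.injective
    rw [heφ, he, he, heφ, hs, aux_dm_mul]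
  · intro Φ Ψ
    refine ⟨φ ((e Φ).2⁻¹ * (e Ψ).2), ⟨_, rfl⟩, ?_⟩
    have key : FacetRel s (e (φ ((e Φ).2⁻¹ * (e Ψ).2) Φ)) (e Ψ) := by
      rw [heφ, mul_inv_cancel_left]
      exact aux_dm_facet₂ r ξ (hCE.maniplex.conn (e Φ).1 (e Ψ).1) (e Ψ).2
    have := aux_reachOn_map e.symm he' key
    rwa [e.symm_apply_apply, e.symm_apply_apply] at this
  · rintro τ ⟨h, rfl⟩ ⟨Φ, hΦ⟩
    have key := aux_reachOn_map e he hΦ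
    rw [heφ] at key
    have h2 := (aux_dm_facet₁ r ξ key).2
    have : h = 1 := by
      have := h2.symm
      simpa using this
    rw [this, hφone]
  · intro Φ
    refine ⟨φ ((e Φ).2⁻¹ * (ξ (e Φ).1 * (e Φ).2)), ⟨_, rfl⟩, ?_⟩
    apply e.injective
    rw [he, heφ, mul_inv_cancel_left, hs, aux_dm_last]

lemma aux_backward {M : Type u} {n : ℕ} (m : Fin (n + 1) → M → M)
    (hM : IsManiplex (n + 1) m) (H : Subgroup (Equiv.Perm M))
    (hsub : (H : Set (Equiv.Perm M)) ⊆ ↑(autGroup m))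
    (htrans : ∀ Φ Ψ : M, ∃ τ ∈ H, FacetRel m (τ Φ) Ψ)
    (hfree : ∀ τ ∈ H, (∃ Φ : M, FacetRel m Φ (τ Φ)) → τ = 1)
    (hlast : ∀ Φ : M, ∃ τ ∈ H, m (Fin.last n) Φ = τ Φ) :
    ∃ (K : Type u) (G : Type u) (inst : Group G) (r : Fin n → K → K) (ξ : K → G),
      @IsCayleyExtender K G inst n r id ξ ∧
      IsManiplex (n + 1) (@derivedMono K G inst n r id ξ) ∧
      ∃ e : M ≃ K × G,
        ∀ (i : Fin (n + 1)) (x : M), e (m i x) = @derivedMono K G inst n r id ξ i (e x) := by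
  classical
  obtain ⟨Φ₀⟩ := hM.nonempty
  -- automorphisms preserve the facet relation
  have hautrel : ∀ τ ∈ H, ∀ {x y : M}, FacetRel m x y → FacetRel m (τ x) (τ y) := by
    intro τ hτ x y h
    induction h with
    | refl => exact .refl
    | @tail b c _ h₂ ih =>
      obtain ⟨i, hi, hxy⟩ := h₂
      exact ih.tail ⟨i, hi, by rw [← hxy]; exact (hsub hτ i b).symm⟩
  -- two elements of H agreeing at a point are equal
  have huniq : ∀ γ ∈ H, ∀ γ' ∈ H, ∀ x : M, γ x = γ' x → γ = γ' := by
    intro γ hγ γ' hγ' x hx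
    have h1 : (γ'⁻¹ * γ) x = x := by
      show γ'⁻¹ (γ x) = x
      rw [hx, Equiv.Perm.inv_def, Equiv.symm_apply_apply]
    have h2 := hfree (γ'⁻¹ * γ) (mul_mem (inv_mem hγ') hγ) ⟨x, by rw [h1]; exact Relation.ReflTransGen.refl⟩
    have h3 : γ' = γ := inv_mul_eq_one.mp h2
    exact h3.symm
  -- the voltage element of a flag
  have hgam : ∀ x : M, ∃ τ, τ ∈ H ∧ m (Fin.last n) x = τ x := by
    intro x; obtain ⟨τ, h1, h2⟩ := hlast x; exact ⟨τ, h1, h2⟩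
  set gam : M → Equiv.Perm M := fun x => (hgam x).choose with hgamdef
  have hgamH : ∀ x, gam x ∈ H := fun x => (hgam x).choose_spec.1
  have hgameq : ∀ x, m (Fin.last n) x = gam x x := fun x => (hgam x).choose_spec.2
  have hgamsq : ∀ x : M, gam x * gam x = 1 := by
    intro x
    have hc : ∀ (i : Fin (n + 1)) (y : M), gam x (m i y) = m i (gam x y) := hsub (hgamH x)
    have h1 : (gam x * gam x) x = (1 : Equiv.Perm M) x := by
      show gam x (gam x x) = x
      calc gam x (gam x x) = gam x (m (Fin.last n) x) := by rw [hgameq]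
        _ = m (Fin.last n) (gam x x) := hc _ _
        _ = m (Fin.last n) (m (Fin.last n) x) := by rw [← hgameq]
        _ = x := hM.invol _ x
    exact huniq _ (mul_mem (hgamH x) (hgamH x)) 1 (one_mem H) x h1
  -- m_n commutes with the first n-1 monodromies
  have hcomm : ∀ (j : Fin (n + 1)), (j : ℕ) + 1 < n → ∀ x : M,
      m (Fin.last n) (m j x) = m j (m (Fin.last n) x) := by
    intro j hj x
    have habs : 2 ≤ |((Fin.last n : Fin (n + 1)) : ℤ) - ((j : ℕ) : ℤ)| := by
      have h1 : ((Fin.last n : Fin (n + 1)) : ℕ) = n := Fin.val_last n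
      have h2 : ((j : ℕ) : ℤ) + 2 ≤ ((n : ℕ) : ℤ) := by exact_mod_cast hj
      rw [h1, abs_of_nonneg (by omega)]
      omega
    have key := hM.sq (Fin.last n) j habs x
    have k1 := congrArg (m (Fin.last n)) key
    rw [hM.invol] at k1
    have k2 := congrArg (m j) k1
    rw [hM.invol] at k2
    exact k2
  have hgamstep : ∀ (j : Fin (n + 1)), (j : ℕ) + 1 < n → ∀ x : M, gam (m j x) = gam x := by
    intro j hj x
    apply huniq _ (hgamH _) _ (hgamH x)
    rw [← hgameq (m j x), hcomm j hj x, hgameq x]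
    exact (hsub (hgamH x) j x).symm
  -- the base facet
  set Kset : Set M := {x | FacetRel m Φ₀ x} with hKsetdef
  have hKclosed : ∀ (i : Fin (n + 1)), (i : ℕ) < n → ∀ {x : M}, x ∈ Kset → m i x ∈ Kset := by
    intro i hi x hx
    exact Relation.ReflTransGen.tail hx ⟨i, by omega, rfl⟩
  set r : Fin n → Kset → Kset := fun i x =>
    ⟨m (Fin.castSucc i) x.1, hKclosed _ (by simpa using i.isLt) x.2⟩ with hrdef
  set ξ : Kset → ↥H := fun Φ => ⟨gam Φ.1, hgamH _⟩ with hξdef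
  -- the facet-classifying automorphism
  have htau : ∀ Ψ : M, ∃ τ, τ ∈ H ∧ FacetRel m (τ Φ₀) Ψ := by
    intro Ψ; obtain ⟨τ, h1, h2⟩ := htrans Φ₀ Ψ; exact ⟨τ, h1, h2⟩
  set tau : M → Equiv.Perm M := fun Ψ => (htau Ψ).choose with htaudef
  have htauH : ∀ Ψ, tau Ψ ∈ H := fun Ψ => (htau Ψ).choose_spec.1
  have htaurel : ∀ Ψ, FacetRel m (tau Ψ Φ₀) Ψ := fun Ψ => (htau Ψ).choose_spec.2
  have htauuniq : ∀ (σ : Equiv.Perm M), σ ∈ H → ∀ Ψ, FacetRel m (σ Φ₀) Ψ → σ = tau Ψ := by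
    intro σ hσ Ψ hrel
    have ht : FacetRel m (σ Φ₀) (tau Ψ Φ₀) :=
      Relation.ReflTransGen.trans hrel (aux_reachOn_symm hM.invol (htaurel Ψ))
    have ht2 := hautrel σ⁻¹ (inv_mem hσ) ht
    rw [Equiv.Perm.inv_def, Equiv.symm_apply_apply, ← Equiv.Perm.inv_def] at ht2
    have h2 := hfree (σ⁻¹ * tau Ψ) (mul_mem (inv_mem hσ) (htauH Ψ)) ⟨Φ₀, ht2⟩
    exact (inv_mul_eq_one.mp h2)
  have hfK : ∀ Ψ : M, (tau Ψ)⁻¹ Ψ ∈ Kset := by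
    intro Ψ
    have := hautrel _ (inv_mem (htauH Ψ)) (htaurel Ψ)
    rwa [Equiv.Perm.inv_def, Equiv.symm_apply_apply, ← Equiv.Perm.inv_def] at this
  set f : M → Kset × ↥H := fun Ψ => (⟨(tau Ψ)⁻¹ Ψ, hfK Ψ⟩, ⟨(tau Ψ)⁻¹, inv_mem (htauH Ψ)⟩)
    with hfdef
  set g : Kset × ↥H → M := fun p => ((p.2 : Equiv.Perm M))⁻¹ p.1.1 with hgdef
  have hgf : ∀ Ψ, g (f Ψ) = Ψ := by
    intro Ψ
    show ((tau Ψ)⁻¹)⁻¹ ((tau Ψ)⁻¹ Ψ) = Ψ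
    simp
  have htaug : ∀ (Φ : Kset) (σ : ↥H), tau (g (Φ, σ)) = (σ : Equiv.Perm M)⁻¹ := by
    intro Φ σ
    symm
    apply htauuniq _ (inv_mem σ.2)
    exact hautrel _ (inv_mem σ.2) Φ.2
  have hfg : ∀ p, f (g p) = p := by
    rintro ⟨Φ, σ⟩
    have h1 := htaug Φ σ
    refine Prod.ext ?_ ?_
    · apply Subtype.ext
      show (tau (g (Φ, σ)))⁻¹ (g (Φ, σ)) = Φ.1
      rw [h1]
      show ((σ : Equiv.Perm M)⁻¹)⁻¹ ((σ : Equiv.Perm M)⁻¹ Φ.1) = Φ.1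
      simp
    · apply Subtype.ext
      show (tau (g (Φ, σ)))⁻¹ = (σ : Equiv.Perm M)
      rw [h1, inv_inv]
  set e : M ≃ Kset × ↥H := ⟨f, g, hgf, hfg⟩ with hedef
  -- intertwining
  have hint : ∀ (i : Fin (n + 1)) (x : M), e (m i x) = derivedMono r id ξ i (e x) := by
    intro i x
    show f (m i x) = derivedMono r id ξ i (f x)
    by_cases hi : (i : ℕ) < n
    · have htx : tau (m i x) = tau x := by
        symm
        apply htauuniq _ (htauH x)
        exact Relation.ReflTransGen.tail (htaurel x) ⟨i, by omega, rfl⟩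
      rw [derivedMono]
      rw [dif_pos hi]
      refine Prod.ext ?_ ?_
      · apply Subtype.ext
        show (tau (m i x))⁻¹ (m i x) = m (Fin.castSucc ⟨(i : ℕ), hi⟩) ((tau x)⁻¹ x)
        have hcs : Fin.castSucc (⟨(i : ℕ), hi⟩ : Fin n) = i := Fin.ext rfl
        rw [htx, hcs]
        exact hsub (inv_mem (htauH x)) i x
      · apply Subtype.ext
        show (tau (m i x))⁻¹ = (tau x)⁻¹
        rw [htx]
    · have hieq : i = Fin.last n := Fin.ext (by have := i.isLt; simp [Fin.val_last]; omega)
      subst hieq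
      set Φ1 : M := (tau x)⁻¹ x with hΦ1
      have hΦ1K : Φ1 ∈ Kset := hfK x
      have hmx : m (Fin.last n) x = (tau x * gam Φ1) Φ1 := by
        show m (Fin.last n) x = tau x (gam Φ1 Φ1)
        rw [← hgameq Φ1]
        rw [show tau x (m (Fin.last n) Φ1) = m (Fin.last n) (tau x Φ1) from hsub (htauH x) _ _]
        rw [show tau x Φ1 = x from Equiv.apply_symm_apply _ _]
      have htx : tau (m (Fin.last n) x) = tau x * gam Φ1 := by
        symm
        apply htauuniq _ (mul_mem (htauH x) (hgamH Φ1))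
        rw [hmx]
        exact hautrel _ (mul_mem (htauH x) (hgamH Φ1)) hΦ1K
      rw [derivedMono]
      rw [dif_neg hi]
      refine Prod.ext ?_ ?_
      · apply Subtype.ext
        show (tau (m (Fin.last n) x))⁻¹ (m (Fin.last n) x) = Φ1
        rw [htx, hmx, Equiv.Perm.inv_def, Equiv.symm_apply_apply]
      · apply Subtype.ext
        show (tau (m (Fin.last n) x))⁻¹ = gam Φ1 * (tau x)⁻¹
        rw [htx, mul_inv_rev]
        congr 1
        exact inv_eq_of_mul_eq_one_left (hgamsq Φ1)
  -- K is an n-maniplex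
  have hreachK : ∀ {x y : M}, FacetRel m x y → ∀ (hx : x ∈ Kset) (hy : y ∈ Kset),
      ConnRel r (⟨x, hx⟩ : Kset) ⟨y, hy⟩ := by
    intro x y h
    induction h with
    | refl => intro hx hy; exact .refl
    | @tail b c hxb hbc ih =>
      intro hx hy
      obtain ⟨i, hi, hib⟩ := hbc
      have hi' : (i : ℕ) < n := by omega
      have hb : b ∈ Kset := Relation.ReflTransGen.trans hx hxb
      refine (ih hx hb).tail ⟨⟨(i : ℕ), hi'⟩, trivial, ?_⟩
      apply Subtype.ext
      show m (Fin.castSucc ⟨(i : ℕ), hi'⟩) b = c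
      rw [show Fin.castSucc (⟨(i : ℕ), hi'⟩ : Fin n) = i from Fin.ext rfl]
      exact hib
  have hKman : IsManiplex n r := by
    refine ⟨⟨⟨Φ₀, .refl⟩⟩, ?_, ?_, ?_, ?_, ?_⟩
    · intro i x; apply Subtype.ext; exact hM.invol (Fin.castSucc i) x.1
    · intro i x h; exact hM.fixfree (Fin.castSucc i) x.1 (congrArg Subtype.val h)
    · intro i j hij x h
      refine hM.fixfree₂ (Fin.castSucc i) (Fin.castSucc j) ?_ x.1 (congrArg Subtype.val h)
      intro hc; exact hij (Fin.castSucc_injective n hc)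
    · intro i j hij x
      apply Subtype.ext
      refine hM.sq (Fin.castSucc i) (Fin.castSucc j) ?_ x.1
      simpa using hij
    · intro Φ Ψ
      exact hreachK (Relation.ReflTransGen.trans (aux_reachOn_symm hM.invol Φ.2) Ψ.2) Φ.2 Ψ.2
  have hconst : ∀ Φ Ψ : Kset, FacetRel r Φ Ψ → ξ Φ = ξ Ψ := by
    intro Φ Ψ h
    induction h with
    | refl => rfl
    | @tail b c _ h₂ ih =>
      rw [ih]
      obtain ⟨i, hi, hib⟩ := h₂
      apply Subtype.ext
      show gam b.1 = gam c.1
      rw [← hib]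
      show gam b.1 = gam (m (Fin.castSucc i) b.1)
      rw [hgamstep (Fin.castSucc i) (by simpa using hi) b.1]
  refine ⟨Kset, ↥H, inferInstance, r, ξ, ⟨hKman, fun x => rfl, fun i _ x => rfl, hconst, ?_⟩,
      aux_maniplex_transport e hint hM, e, hint⟩
  intro Φ
  show ξ Φ = (ξ Φ)⁻¹
  exact eq_inv_of_mul_eq_one_left (Subtype.ext (hgamsq Φ.1))

end Aux2

/-- An `(n+1)`-maniplex `M` is isomorphic to the derived graph of some
canonical Cayley extender (i.e. with `r_n = id`) iff some subgroup `H ≤ Aut(M)` acts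
regularly on the facets of `M` and for every flag `Φ` there is `γ ∈ H` with `m_n Φ = Φγ`. -/
theorem statement2 {M : Type u} {n : ℕ} (m : Fin (n + 1) → M → M)
    (hM : IsManiplex (n + 1) m) :
    (∃ (K : Type u) (G : Type u) (inst : Group G) (r : Fin n → K → K) (ξ : K → G),
        @IsCayleyExtender K G inst n r id ξ ∧
        IsManiplex (n + 1) (@derivedMono K G inst n r id ξ) ∧
        ∃ e : M ≃ K × G,
          ∀ (i : Fin (n + 1)) (x : M), e (m i x) = @derivedMono K G inst n r id ξ i (e x)) ↔
      ∃ H : Subgroup (Equiv.Perm M),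
        (H : Set (Equiv.Perm M)) ⊆ ↑(autGroup m) ∧
        (∀ Φ Ψ : M, ∃ τ ∈ H, FacetRel m (τ Φ) Ψ) ∧
        (∀ τ ∈ H, (∃ Φ : M, FacetRel m Φ (τ Φ)) → τ = 1) ∧
        (∀ Φ : M, ∃ τ ∈ H, m (Fin.last n) Φ = τ Φ) := by
  constructor
  · rintro ⟨K, G, inst, r, ξ, hCE, _, e, he⟩
    exact aux_forward m r ξ hCE e he
  · rintro ⟨H, h1, h2, h3, h4⟩
    exact aux_backward m hM H h1 h2 h3 h4
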